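/- (Lemma 9.1, explicit form.) Fix t₀ > 0 and set p₀ := (√2,1,1,1,1/t₀), m₀ := (√2,1,1,1,-t₀), p₃ := (√2,1,1,-1,-1/t₀), m₃ := (√2,1,1,-1,t₀). Suppose u⁺, u⁻, w⁺, w⁻ ∈ ℝ^{1,4} satisfy: ⟨u⁺, p₀⟩ = ⟨u⁺, A⟩ = ⟨u⁺, B⟩ = ⟨u⁺, C⟩ = 0; ⟨u⁻, m₀⟩ = ⟨u⁻, A⟩ = ⟨u⁻, B⟩ = ⟨u⁻, C⟩ = 0; ⟨w⁺, p₃⟩ = ⟨w⁺, A⟩ = ⟨w⁺, B⟩ = ⟨w⁺, D⟩ = 0; ⟨w⁻, m₃⟩ = ⟨w⁻, A⟩ = ⟨w⁻, B⟩ = ⟨w⁻, D⟩ = 0; together with the infinitesimal orthogonality conditions ⟨u⁻, p₀⟩ + ⟨m₀, u⁺⟩ = 0, ⟨u⁻, p₃⟩ + ⟨m₀, w⁺⟩ = 0, and ⟨w⁺, m₃⟩ + ⟨p₃, w⁻⟩ = 0. Then there exists a real number a such that u⁺ = (-a/t₀²)·(√2,1,1,1,-t₀), u⁻ = a·(√2,1,1,1,1/t₀),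 w⁺ = (-a/t₀²)·(√2,1,1,-1,t₀), and w⁻ = a·(√2,1,1,-1,-1/t₀). -/
import Mathlib


/-- The Minkowski inner product on `ℝ^{1,4}`, identified with `Fin 5 → ℝ`. -/
noncomputable def mink (v w : Fin 5 → ℝ) : ℝ :=
  -(v 0 * w 0) + v 1 * w 1 + v 2 * w 2 + v 3 * w 3 + v 4 * w 4

/-- The letter vector `A`. -/
noncomputable def lA : Fin 5 → ℝ := ![1, Real.sqrt 2, 0, 0, 0]
/-- The letter vector `B`. -/
noncomputable def lB : Fin 5 → ℝ := ![1, 0, Real.sqrt 2, 0, 0]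
/-- The letter vector `C`. -/
noncomputable def lC : Fin 5 → ℝ := ![1, 0, 0, Real.sqrt 2, 0]
/-- The letter vector `D`. -/
noncomputable def lD : Fin 5 → ℝ := ![1, 0, 0, -Real.sqrt 2, 0]

/-- Lemma 9.1, explicit form: any infinitesimal deformation `(up, um, wp, wm)` of the
0- and 3-walls `(p₀, m₀, p₃, m₃)` of the deformed 24-cell, fixing the letter walls and
satisfying the derivatives of the norm and orthogonality conditions, is given by a single
scalar `a`. -/
theorem zero_and_three_walls_infinitesimal (t₀ : ℝ) (ht₀ : 0 < t₀)
    (up um wp wm : Fin 5 → ℝ) :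
    let p₀ : Fin 5 → ℝ := ![Real.sqrt 2, 1, 1, 1, 1 / t₀]
    let m₀ : Fin 5 → ℝ := ![Real.sqrt 2, 1, 1, 1, -t₀]
    let p₃ : Fin 5 → ℝ := ![Real.sqrt 2, 1, 1, -1, -(1 / t₀)]
    let m₃ : Fin 5 → ℝ := ![Real.sqrt 2, 1, 1, -1, t₀]
    mink up p₀ = 0 → mink up lA = 0 → mink up lB = 0 → mink up lC = 0 →
    mink um m₀ = 0 → mink um lA = 0 → mink um lB = 0 → mink um lC = 0 →
    mink wp p₃ = 0 → mink wp lA = 0 → mink wp lB = 0 → mink wp lD = 0 →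
    mink wm m₃ = 0 → mink wm lA = 0 → mink wm lB = 0 → mink wm lD = 0 →
    mink um p₀ + mink m₀ up = 0 →
    mink um p₃ + mink m₀ wp = 0 →
    mink wp m₃ + mink p₃ wm = 0 →
    ∃ a : ℝ,
      up = (-a / t₀ ^ 2) • (![Real.sqrt 2, 1, 1, 1, -t₀] : Fin 5 → ℝ) ∧
      um = a • (![Real.sqrt 2, 1, 1, 1, 1 / t₀] : Fin 5 → ℝ) ∧
      wp = (-a / t₀ ^ 2) • (![Real.sqrt 2, 1, 1, -1, t₀] : Fin 5 → ℝ) ∧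
      wm = a • (![Real.sqrt 2, 1, 1, -1, -(1 / t₀)] : Fin 5 → ℝ) := by
  intro p₀ m₀ p₃ m₃ E1 E2 E3 E4 F1 F2 F3 F4 G1 G2 G3 G4 H1 H2 H3 H4 K1 K2 K3
  have ht : t₀ ≠ 0 := ne_of_gt ht₀
  have hs2 : Real.sqrt 2 * Real.sqrt 2 = 2 := Real.mul_self_sqrt (by norm_num)
  have hs0 : Real.sqrt 2 ≠ 0 := by positivity
  simp only [mink, p₀, m₀, p₃, m₃, lA, lB, lC, lD, Matrix.cons_val_zero, Matrix.cons_val_one,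
    Matrix.head_cons, Matrix.cons_val_two, Matrix.tail_cons, Matrix.cons_val_three,
    Matrix.cons_val_four, mul_zero, mul_one, add_zero, mul_neg]
    at E1 E2 E3 E4 F1 F2 F3 F4 G1 G2 G3 G4 H1 H2 H3 H4 K1 K2 K3
  field_simp at E1 G1 K1 K2 K3
  have hup0 : up 0 = up 1 * Real.sqrt 2 := by linear_combination -E2
  have hup2 : up 2 = up 1 := mul_right_cancel₀ hs0 (by linear_combination E3 - E2)
  have hup3 : up 3 = up 1 := mul_right_cancel₀ hs0 (by linear_combination E4 - E2)
  have hup4 : up 4 = -(t₀ * up 1) := by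
    linear_combination E1 + Real.sqrt 2 * t₀ * hup0 - t₀ * hup2 - t₀ * hup3 + t₀ * up 1 * hs2
  have hum0 : um 0 = um 1 * Real.sqrt 2 := by linear_combination -F2
  have hum2 : um 2 = um 1 := mul_right_cancel₀ hs0 (by linear_combination F3 - F2)
  have hum3 : um 3 = um 1 := mul_right_cancel₀ hs0 (by linear_combination F4 - F2)
  have hum4 : um 4 = um 1 / t₀ := by
    rw [eq_div_iff ht]
    linear_combination -F1 - Real.sqrt 2 * hum0 + hum2 + hum3 - um 1 * hs2
  have hwp0 : wp 0 = wp 1 * Real.sqrt 2 := by linear_combination -G2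
  have hwp2 : wp 2 = wp 1 := mul_right_cancel₀ hs0 (by linear_combination G3 - G2)
  have hwp3 : wp 3 = -wp 1 := mul_right_cancel₀ hs0 (by linear_combination G2 - G4)
  have hwp4 : wp 4 = t₀ * wp 1 := by
    linear_combination -G1 - Real.sqrt 2 * t₀ * hwp0 + t₀ * hwp2 - t₀ * hwp3 - t₀ * wp 1 * hs2
  have hwm0 : wm 0 = wm 1 * Real.sqrt 2 := by linear_combination -H2
  have hwm2 : wm 2 = wm 1 := mul_right_cancel₀ hs0 (by linear_combination H3 - H2)
  have hwm3 : wm 3 = -wm 1 := mul_right_cancel₀ hs0 (by linear_combination H2 - H4)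
  have hwm4 : wm 4 = -wm 1 / t₀ := by
    rw [eq_div_iff ht]
    linear_combination H1 + Real.sqrt 2 * hwm0 - hwm2 + hwm3 + wm 1 * hs2
  rw [hum0, hum2, hum3, hum4, hup0, hup2, hup3, hup4] at K1
  rw [hum0, hum2, hum3, hum4, hwp0, hwp2, hwp3, hwp4] at K2
  rw [hwp0, hwp2, hwp3, hwp4, hwm0, hwm2, hwm3, hwm4] at K3
  field_simp at K1 K2 K3
  have h1t : (0:ℝ) < 1 + t₀ ^ 2 := by positivity
  have hup1 : up 1 * t₀ ^ 2 = -um 1 := by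
    have h : (up 1 * t₀ ^ 2 + um 1) * (1 + t₀ ^ 2) = 0 := by
      linear_combination K1 + (um 1 + up 1) * t₀ * t₀ * hs2
    rcases mul_eq_zero.mp h with h' | h'
    · linarith
    · linarith
  have hwp1 : wp 1 * t₀ ^ 2 = -um 1 := by
    have h : (wp 1 * t₀ ^ 2 + um 1) * (1 + t₀ ^ 2) = 0 := by
      linear_combination -K2 - (um 1 + wp 1) * t₀ * t₀ * hs2
    rcases mul_eq_zero.mp h with h' | h'
    · linarith
    · linarith
  have hwm1 : wm 1 = um 1 := by
    have h : (wm 1 + wp 1 * t₀ ^ 2) * (1 + t₀ ^ 2) = 0 := by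
      linear_combination K3 + (wp 1 + wm 1) * t₀ * t₀ * hs2
    rcases mul_eq_zero.mp h with h' | h'
    · linarith
    · linarith
  have hup1' : up 1 = -um 1 / t₀ ^ 2 := by field_simp; linear_combination hup1
  have hwp1' : wp 1 = -um 1 / t₀ ^ 2 := by field_simp; linear_combination hwp1
  refine ⟨um 1, ?_, ?_, ?_, ?_⟩ <;> funext i <;> fin_cases i <;>
    simp only [Pi.smul_apply, smul_eq_mul, Matrix.cons_val_zero, Matrix.cons_val_one,
      Matrix.head_cons, Matrix.cons_val_two, Matrix.tail_cons, Matrix.cons_val_three,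
      Matrix.cons_val_four, Fin.isValue, Fin.reduceFinMk]
  · linear_combination hup0 + Real.sqrt 2 * hup1'
  · linear_combination hup1'
  · linear_combination hup2 + hup1'
  · linear_combination hup3 + hup1'
  · linear_combination hup4 - t₀ * hup1'
  · linear_combination hum0
  · ring
  · linear_combination hum2
  · linear_combination hum3
  · linear_combination hum4
  · linear_combination hwp0 + Real.sqrt 2 * hwp1'
  · linear_combination hwp1'
  · linear_combination hwp2 + hwp1'
  · linear_combination hwp3 - hwp1'
  · linear_combination hwp4 + t₀ * hwp1'
  · linear_combination hwm0 + Real.sqrt 2 * hwm1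
  · linear_combination hwm1
  · linear_combination hwm2 + hwm1
  · linear_combination hwm3 - hwm1
  · linear_combination hwm4 - (1/t₀) * hwm1
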